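/- arXiv:1908.09589 — 3 statements merged into one kernel-verified Lean document; each statement's English description precedes it below -/
import Mathlib

section
/- Let n ≥ 1 and let S ⊆ {1,…,n} × {1,…,n}. Then there exists a polynomial f ∈ ℚ[X] such that for every finite field F of odd cardinality q = |F|, Σ_{r=0}^n |Sym_{n,r}(F; S)| · q^{n−r} = f(q). -/
/-!
Summing `q ^ (n - rank a)` over the symmetric `S`-supported matrices `a` counts the pairs
`(a, x)` with `a *ᵥ x = 0`. For fixed `x` these `a` form the kernel of a linear map whose rank is
`n` minus the dimension of `{v | v ⬝ᵥ a *ᵥ x = 0 for all such a}`. A diagonal rescaling replaces `x`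
by the indicator of its support `T`, and then, in odd characteristic, `v` is constrained by
`v i + v j = 0` along the edges of the graph that `S` induces on `T` and by `v k = 0` at a few
forced vertices. The space of such `v` therefore has dimension the number of bipartite components
without forced vertices, which does not depend on the field, so the sum is `∑_T (q - 1) ^ #T * q ^ e(T)` with `e(T)`
depending only on `S` and `T`.
-/

open Matrix Finset

section Counting
variable {F : Type*} [Field F] [Fintype F]

lemma card_mulVec_eq_zero {m k : Type*} [Fintype m] [Fintype k] (M : Matrix m k F) :
    Nat.card {y : k → F // M *ᵥ y = 0} = Fintype.card F ^ (Fintype.card k - M.rank) := by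
  have e : {y : k → F // M *ᵥ y = 0} ≃ LinearMap.ker M.mulVecLin :=
    Equiv.subtypeEquivRight fun y => by simp [LinearMap.mem_ker]
  rw [Nat.card_congr e, Module.natCard_eq_pow_finrank (K := F), ← Nat.card_eq_fintype_card]
  have := LinearMap.finrank_range_add_finrank_ker M.mulVecLin
  rw [Module.finrank_fintype_fun_eq_card] at this
  rw [Nat.card_eq_fintype_card, Matrix.rank]
  congr 1
  omega

lemma sum_card_rank_mul_pow {m k : Type*} [Fintype m] [Fintype k] [DecidableEq k]
    (P : Matrix m k F → Prop) :
    ∑ r ∈ range (Fintype.card k + 1),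
        Nat.card {a // P a ∧ a.rank = r} * Fintype.card F ^ (Fintype.card k - r)
      = ∑ x : k → F, Nat.card {a // P a ∧ a *ᵥ x = 0} := by
  classical
  simp only [Nat.card_eq_fintype_card, Fintype.card_subtype, card_filter, sum_mul]
  rw [sum_comm]
  have hkernel : ∀ a : Matrix m k F, Fintype.card F ^ (Fintype.card k - a.rank)
      = ∑ x : k → F, if a *ᵥ x = 0 then 1 else 0 := by
    intro a
    rw [← card_mulVec_eq_zero, ← card_filter, Nat.card_eq_fintype_card, Fintype.card_subtype]
  calc ∑ a : Matrix m k F, ∑ r ∈ range (Fintype.card k + 1),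
        (if P a ∧ a.rank = r then 1 else 0) * Fintype.card F ^ (Fintype.card k - r)
      = ∑ a : Matrix m k F, ∑ x : k → F, if P a ∧ a *ᵥ x = 0 then 1 else 0 := by
        refine sum_congr rfl fun a _ => ?_
        have hr : a.rank ∈ range (Fintype.card k + 1) :=
          mem_range.mpr (Nat.lt_succ_of_le a.rank_le_card_width)
        by_cases hP : P a
        · simp [hP, hr, hkernel]
        · simp [hP]
    _ = _ := sum_comm

lemma card_filter_support_eq_pow {ι : Type*} [Fintype ι] [DecidableEq ι] [DecidableEq F]
    (T : Finset ι) :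
    #{x : ι → F | ({i | x i ≠ 0} : Finset ι) = T} = (Fintype.card F - 1) ^ #T := by
  have hfiber : ({x : ι → F | ({i | x i ≠ 0} : Finset ι) = T} : Finset _)
      = Fintype.piFinset fun i => if i ∈ T then {0}ᶜ else {0} := by
    ext x
    simp only [mem_filter, mem_univ, true_and, Fintype.mem_piFinset, Finset.ext_iff]
    refine forall_congr' fun i => ?_
    by_cases hi : i ∈ T <;> simp [hi]
  simp only [hfiber, Fintype.card_piFinset, apply_ite card, card_singleton]
  rw [prod_ite_mem, univ_inter, prod_const]
  simp [card_compl]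

lemma sum_comp_support {ι : Type*} [Fintype ι] [DecidableEq ι] [DecidableEq F]
    (f : Finset ι → ℕ) :
    ∑ x : ι → F, f {i | x i ≠ 0} = ∑ T : Finset ι, (Fintype.card F - 1) ^ #T * f T := by
  rw [← sum_fiberwise (g := fun x : ι → F => ({i | x i ≠ 0} : Finset ι))]
  refine sum_congr rfl fun T _ => ?_
  rw [sum_congr rfl fun x hx => congrArg f (mem_filter.mp hx).2, sum_const,
    card_filter_support_eq_pow, smul_eq_mul]

end Counting

lemma Matrix.IsSymm.two_mul_dotProduct_mulVec {ι F : Type*} [Fintype ι] [CommRing F]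
    {a : Matrix ι ι F} (ha : a.IsSymm) (x v : ι → F) :
    2 * (v ⬝ᵥ a *ᵥ x) = ∑ k, ∑ l, a k l * (v k * x l + v l * x k) := by
  have hdirect : v ⬝ᵥ a *ᵥ x = ∑ k, ∑ l, a k l * (v k * x l) := by
    simp only [dotProduct, mulVec, mul_sum]
    exact sum_congr rfl fun k _ => sum_congr rfl fun l _ => by ring
  have hswap : v ⬝ᵥ a *ᵥ x = ∑ k, ∑ l, a k l * (v l * x k) := by
    simp only [dotProduct, mulVec, mul_sum]
    rw [sum_comm]
    exact sum_congr rfl fun k _ => sum_congr rfl fun l _ => by rw [ha.apply]; ring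
  rw [two_mul]
  nth_rw 1 [hdirect]
  simp only [hswap, mul_add, sum_add_distrib]

section SymmSupported
variable {ι : Type*} (S : Set (ι × ι)) {F : Type*} [CommSemiring F]

def IsSymmSupported (a : Matrix ι ι F) : Prop :=
  a.IsSymm ∧ ∀ i j, (i, j) ∉ S → a i j = 0

variable {S} in
lemma IsSymmSupported.apply_eq_zero {a : Matrix ι ι F} (ha : IsSymmSupported S a) {i j : ι}
    (h : ¬((i, j) ∈ S ∧ (j, i) ∈ S)) : a i j = 0 := by
  rw [not_and_or] at h
  rcases h with h | h
  · exact ha.2 i j h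
  · rw [← ha.1.apply]; exact ha.2 j i h

variable [LinearOrder ι]

abbrev SymPos : Type _ := {p : ι × ι // p.1 ≤ p.2 ∧ p ∈ S ∧ p.swap ∈ S}

noncomputable instance [Finite ι] : Fintype (SymPos S) := Fintype.ofFinite _

open Classical in
noncomputable def symOfCoords : (SymPos S → F) →ₗ[F] Matrix ι ι F where
  toFun y := Matrix.of fun i j =>
    if h : i ≤ j ∧ (i, j) ∈ S ∧ (j, i) ∈ S then y ⟨(i, j), h⟩
    else if h' : j ≤ i ∧ (j, i) ∈ S ∧ (i, j) ∈ S then y ⟨(j, i), h'⟩ else 0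
  map_add' y z := by ext i j; simp only [of_apply, Matrix.add_apply]; split_ifs <;> simp
  map_smul' c y := by ext i j; simp only [of_apply, Matrix.smul_apply]; split_ifs <;> simp

open Classical in
lemma symOfCoords_apply (y : SymPos S → F) (i j : ι) : symOfCoords S y i j =
    if h : i ≤ j ∧ (i, j) ∈ S ∧ (j, i) ∈ S then y ⟨(i, j), h⟩
    else if h' : j ≤ i ∧ (j, i) ∈ S ∧ (i, j) ∈ S then y ⟨(j, i), h'⟩ else 0 :=
  rfl

variable {S}

lemma isSymmSupported_symOfCoords (y : SymPos S → F) : IsSymmSupported S (symOfCoords S y) := by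
  refine ⟨?_, fun i j hij => ?_⟩
  · ext i j
    simp only [transpose_apply, symOfCoords_apply]
    rcases lt_trichotomy i j with hlt | rfl | hlt
    · simp [hlt.le, hlt.not_ge]
    · rfl
    · simp [hlt.le, hlt.not_ge]
  · simp [symOfCoords_apply, hij]

lemma symOfCoords_coords {a : Matrix ι ι F} (ha : IsSymmSupported S a) :
    symOfCoords S (fun p => a p.1.1 p.1.2) = a := by
  ext i j
  simp only [symOfCoords_apply]
  split_ifs with h h'
  · rfl
  · exact ha.1.apply i j
  · exact (ha.apply_eq_zero fun hS => (le_total i j).elim (fun hle => h ⟨hle, hS⟩)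
      fun hle => h' ⟨hle, hS.2, hS.1⟩).symm

lemma coords_symOfCoords (y : SymPos S → F) :
    (fun p : SymPos S => symOfCoords S y p.1.1 p.1.2) = y := by
  ext ⟨⟨i, j⟩, hp⟩
  exact dif_pos hp

variable (S F) in
noncomputable def symCoordsEquiv : {a : Matrix ι ι F // IsSymmSupported S a} ≃ (SymPos S → F) where
  toFun a p := a.1 p.1.1 p.1.2
  invFun y := ⟨symOfCoords S y, isSymmSupported_symOfCoords y⟩
  left_inv a := Subtype.ext (symOfCoords_coords a.2)
  right_inv := coords_symOfCoords

end SymmSupported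

section Orthogonality
variable {ι : Type*} (S : Set (ι × ι)) {F : Type*} [Field F]

/-- In characteristic `≠ 2` this says `v ⬝ᵥ a *ᵥ x = 0` for every symmetric `a` supported on `S`. -/
def SymOrth (x v : ι → F) : Prop :=
  ∀ i j, (i, j) ∈ S → (j, i) ∈ S → v i * x j + v j * x i = 0

variable {S}

lemma symOrth_mul_iff {d : ι → F} (hd : ∀ i, d i ≠ 0) (t w : ι → F) :
    SymOrth S (d * t) (d * w) ↔ SymOrth S t w := by
  refine forall₄_congr fun i j _ _ => ?_
  have hfactor : (d * w) i * (d * t) j + (d * w) j * (d * t) i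
      = d i * d j * (w i * t j + w j * t i) := by
    simp only [Pi.mul_apply]; ring
  rw [hfactor, mul_eq_zero, or_iff_right (mul_ne_zero (hd i) (hd j))]

lemma card_symOrth_mul {d : ι → F} (hd : ∀ i, d i ≠ 0) (t : ι → F) :
    Nat.card {v // SymOrth S (d * t) v} = Nat.card {w // SymOrth S t w} :=
  Nat.card_congr <| .symm <|
    (Equiv.piCongrRight fun i => Equiv.mulLeft₀ (d i) (hd i)).subtypeEquiv
      fun w => (symOrth_mul_iff hd t w).symm

lemma card_symOrth_eq_indicator [Fintype ι] [DecidableEq F] (x : ι → F) :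
    Nat.card {v // SymOrth S x v} =
      Nat.card {w // SymOrth S ((({i | x i ≠ 0} : Finset ι) : Set ι).indicator (1 : ι → F)) w} := by
  set d : ι → F := fun i => if x i = 0 then 1 else x i
  have hd : ∀ i, d i ≠ 0 := fun i => by by_cases h : x i = 0 <;> simp [d, h]
  have hx : x = d * (({i | x i ≠ 0} : Finset ι) : Set ι).indicator 1 := by
    ext i; by_cases h : x i = 0 <;> simp [d, h]
  nth_rw 1 [hx]
  exact card_symOrth_mul hd _

lemma forall_dotProduct_mulVec_eq_zero_iff [Fintype ι] (h2 : (2 : F) ≠ 0) (x v : ι → F) :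
    (∀ a, IsSymmSupported S a → v ⬝ᵥ a *ᵥ x = 0) ↔ SymOrth S x v := by
  classical
  constructor
  · intro h i j hij hji
    have ha : IsSymmSupported S (single i j (1 : F) + single j i 1) := by
      refine ⟨by simp [IsSymm, transpose_add, add_comm], fun k l hkl => ?_⟩
      have h1 : ¬(i = k ∧ j = l) := by rintro ⟨rfl, rfl⟩; exact hkl hij
      have h2 : ¬(j = k ∧ i = l) := by rintro ⟨rfl, rfl⟩; exact hkl hji
      simp [h1, h2]
    simpa [add_mulVec, single_mulVec, dotProduct_add, ← Pi.single.eq_1] using h _ ha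
  · intro hv a ha
    have hterm : ∀ k l, a k l * (v k * x l + v l * x k) = 0 := fun k l => by
      by_cases hS : (k, l) ∈ S ∧ (l, k) ∈ S
      · rw [hv k l hS.1 hS.2, mul_zero]
      · rw [ha.apply_eq_zero hS, zero_mul]
    have hdouble := ha.1.two_mul_dotProduct_mulVec x v
    simp only [hterm, sum_const_zero] at hdouble
    exact (mul_eq_zero.mp hdouble).resolve_left h2

end Orthogonality

section Graph
variable {ι : Type*}

def symGraph (S : Set (ι × ι)) (T : Finset ι) : SimpleGraph ι where
  Adj i j := i ≠ j ∧ i ∈ T ∧ j ∈ T ∧ (i, j) ∈ S ∧ (j, i) ∈ S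
  symm := ⟨fun _ _ ⟨hne, hi, hj, hij, hji⟩ => ⟨hne.symm, hj, hi, hji, hij⟩⟩
  loopless := ⟨fun _ h => h.1 rfl⟩

variable (S : Set (ι × ι)) (T : Finset ι)

/- For `t = 1_T` the equations `SymOrth S t w` say `w i + w j = 0` along the edges of
`symGraph S T` and `w k = 0` at the forced zeros `k`, so `w` is free on exactly one vertex of
each component that contains no forced zero and no closed walk of odd length. -/

def IsForcedZero (k : ι) : Prop :=
  (k ∈ T ∧ (k, k) ∈ S) ∨ (k ∉ T ∧ ∃ j ∈ T, (k, j) ∈ S ∧ (j, k) ∈ S)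

def IsFreeComponent (C : (symGraph S T).ConnectedComponent) : Prop :=
  ∀ k, (symGraph S T).connectedComponentMk k = C →
    ¬ IsForcedZero S T k ∧ ∀ w : (symGraph S T).Walk k k, Even w.length

noncomputable def freeRank : ℕ :=
  Nat.card {C : (symGraph S T).ConnectedComponent // IsFreeComponent S T C}

variable {S T} {F : Type*} [Field F]

namespace SymOrth
variable {w : ι → F}

lemma apply_eq_neg_of_adj (hw : SymOrth S ((T : Set ι).indicator 1) w) {i j : ι}
    (h : (symGraph S T).Adj i j) : w j = -w i := by
  obtain ⟨-, hi, hj, hij, hji⟩ := h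
  have := hw i j hij hji
  simp only [Set.indicator_of_mem (mem_coe.mpr hi), Set.indicator_of_mem (mem_coe.mpr hj),
    Pi.one_apply, mul_one] at this
  linear_combination this

lemma apply_eq_of_walk (hw : SymOrth S ((T : Set ι).indicator 1) w) {i j : ι}
    (p : (symGraph S T).Walk i j) :
    w j = (-1) ^ p.length * w i := by
  induction p with
  | nil => simp
  | cons h p ih => rw [SimpleGraph.Walk.length_cons, ih, hw.apply_eq_neg_of_adj h]; ring

lemma apply_eq_zero_of_isForcedZero (hw : SymOrth S ((T : Set ι).indicator 1) w)
    (h2 : (2 : F) ≠ 0) {k : ι} (hk : IsForcedZero S T k) : w k = 0 := by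
  rcases hk with ⟨hkT, hkk⟩ | ⟨hkT, j, hjT, hkj, hjk⟩
  · have := hw k k hkk hkk
    simp only [Set.indicator_of_mem (mem_coe.mpr hkT), Pi.one_apply, mul_one, ← two_mul] at this
    exact (mul_eq_zero.mp this).resolve_left h2
  · simpa [hkT, hjT] using hw k j hkj hjk

lemma apply_eq_zero_of_not_isFreeComponent (hw : SymOrth S ((T : Set ι).indicator 1) w)
    (h2 : (2 : F) ≠ 0) {i : ι}
    (hi : ¬ IsFreeComponent S T ((symGraph S T).connectedComponentMk i)) : w i = 0 := by
  simp only [IsFreeComponent, not_forall, not_and_or, not_not] at hi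
  obtain ⟨k, hk, hbad⟩ := hi
  obtain ⟨p⟩ := SimpleGraph.ConnectedComponent.exact hk
  rw [hw.apply_eq_of_walk p]
  rcases hbad with hzero | ⟨q, hodd⟩
  · rw [hw.apply_eq_zero_of_isForcedZero h2 hzero, mul_zero]
  · have hq := hw.apply_eq_of_walk q
    rw [(Nat.not_even_iff_odd.mp hodd).neg_one_pow] at hq
    have : (2 : F) * w k = 0 := by linear_combination hq
    rw [(mul_eq_zero.mp this).resolve_left h2, mul_zero]

end SymOrth

lemma IsFreeComponent.neg_one_pow_length_eq {C : (symGraph S T).ConnectedComponent}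
    (hC : IsFreeComponent S T C) {u i : ι} (hu : (symGraph S T).connectedComponentMk u = C)
    (p q : (symGraph S T).Walk u i) : (-1 : F) ^ p.length = (-1) ^ q.length := by
  have heven := (hC u hu).2 (p.append q.reverse)
  rw [SimpleGraph.Walk.length_append, SimpleGraph.Walk.length_reverse, Nat.even_iff] at heven
  rw [neg_one_pow_eq_pow_mod_two, neg_one_pow_eq_pow_mod_two (n := q.length)]
  congr 1
  omega

variable (S T) in
noncomputable def walkFromRep (i : ι) :
    (symGraph S T).Walk (Quot.out ((symGraph S T).connectedComponentMk i)) i :=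
  (SimpleGraph.ConnectedComponent.exact (Quot.out_eq _)).some

open Classical in
variable (S T) in
noncomputable def extendFree (t : {C // IsFreeComponent S T C} → F) (i : ι) : F :=
  if h : IsFreeComponent S T ((symGraph S T).connectedComponentMk i) then
    (-1) ^ (walkFromRep S T i).length * t ⟨_, h⟩
  else 0

lemma extendFree_eq_zero_of_isForcedZero (t : {C // IsFreeComponent S T C} → F) {k : ι}
    (hk : IsForcedZero S T k) : extendFree S T t k = 0 :=
  dif_neg fun h => (h k rfl).1 hk

lemma extendFree_eq_neg_of_adj (t : {C // IsFreeComponent S T C} → F) {i j : ι}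
    (h : (symGraph S T).Adj i j) : extendFree S T t j = -extendFree S T t i := by
  have hmk := SimpleGraph.ConnectedComponent.connectedComponentMk_eq_of_adj h
  by_cases hfree : IsFreeComponent S T ((symGraph S T).connectedComponentMk i)
  · have hfree' : IsFreeComponent S T ((symGraph S T).connectedComponentMk j) := hmk ▸ hfree
    have hsign := hfree'.neg_one_pow_length_eq (F := F) (Quot.out_eq _) (walkFromRep S T j)
      (((walkFromRep S T i).concat h).copy (congrArg Quot.out hmk) rfl)
    rw [SimpleGraph.Walk.length_copy, SimpleGraph.Walk.length_concat, pow_succ] at hsign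
    have ht : t ⟨_, hfree'⟩ = t ⟨_, hfree⟩ := congrArg t (Subtype.ext hmk.symm)
    rw [extendFree, extendFree, dif_pos hfree, dif_pos hfree', hsign, ht]
    ring
  · have hfree' : ¬ IsFreeComponent S T ((symGraph S T).connectedComponentMk j) := hmk ▸ hfree
    rw [extendFree, extendFree, dif_neg hfree, dif_neg hfree', neg_zero]

lemma extendFree_rep (t : {C // IsFreeComponent S T C} → F) (C : {C // IsFreeComponent S T C}) :
    extendFree S T t (Quot.out C.1) = t C := by
  have hout : (symGraph S T).connectedComponentMk (Quot.out C.1) = C.1 := Quot.out_eq _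
  have hfree : IsFreeComponent S T ((symGraph S T).connectedComponentMk (Quot.out C.1)) := by
    rw [hout]; exact C.2
  have hsign := hfree.neg_one_pow_length_eq (F := F) (Quot.out_eq _) (walkFromRep S T _)
    (SimpleGraph.Walk.nil.copy (congrArg Quot.out hout).symm rfl)
  rw [SimpleGraph.Walk.length_copy, SimpleGraph.Walk.length_nil, pow_zero] at hsign
  rw [extendFree, dif_pos hfree, hsign, one_mul]
  exact congrArg t (Subtype.ext hout)

lemma symOrth_extendFree (t : {C // IsFreeComponent S T C} → F) :
    SymOrth S ((T : Set ι).indicator 1) (extendFree S T t) := by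
  intro i j hij hji
  by_cases hi : i ∈ T <;> by_cases hj : j ∈ T
  · obtain rfl | hne := eq_or_ne i j
    · simp [extendFree_eq_zero_of_isForcedZero t (Or.inl ⟨hi, hij⟩)]
    · simp [hi, hj, extendFree_eq_neg_of_adj t ⟨hne, hi, hj, hij, hji⟩]
  · simp [hi, hj, extendFree_eq_zero_of_isForcedZero t (Or.inr ⟨hj, i, hi, hji, hij⟩)]
  · simp [hi, hj, extendFree_eq_zero_of_isForcedZero t (Or.inr ⟨hi, j, hj, hij, hji⟩)]
  · simp [hi, hj]

variable (S T F) in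
noncomputable def symOrthEquiv (h2 : (2 : F) ≠ 0) :
    {w : ι → F // SymOrth S ((T : Set ι).indicator 1) w} ≃
      ({C // IsFreeComponent S T C} → F) where
  toFun w C := w.1 (Quot.out C.1)
  invFun t := ⟨extendFree S T t, symOrth_extendFree t⟩
  left_inv w := by
    refine Subtype.ext <| funext fun i => ?_
    show extendFree S T (fun C => w.1 (Quot.out C.1)) i = w.1 i
    by_cases hfree : IsFreeComponent S T ((symGraph S T).connectedComponentMk i)
    · rw [extendFree, dif_pos hfree]
      exact (w.2.apply_eq_of_walk (walkFromRep S T i)).symm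
    · rw [extendFree, dif_neg hfree, w.2.apply_eq_zero_of_not_isFreeComponent h2 hfree]
  right_inv t := funext (extendFree_rep t)

lemma card_symOrth_indicator [Finite ι] [Fintype F] (h2 : (2 : F) ≠ 0) :
    Nat.card {w : ι → F // SymOrth S ((T : Set ι).indicator 1) w}
      = Fintype.card F ^ freeRank S T := by
  rw [Nat.card_congr (symOrthEquiv S T F h2), Nat.card_fun, Nat.card_eq_fintype_card, freeRank]

end Graph

section Coordinates
variable {ι : Type*} [LinearOrder ι] [Fintype ι] {S : Set (ι × ι)} {F : Type*} [Field F]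

variable (S) in
noncomputable def symCoordMatrix (x : ι → F) : Matrix ι (SymPos S) F :=
  LinearMap.toMatrix' ((mulVecBilin F F).flip x ∘ₗ symOfCoords S)

lemma symCoordMatrix_mulVec (x : ι → F) (y : SymPos S → F) :
    symCoordMatrix S x *ᵥ y = symOfCoords S y *ᵥ x := by
  simp [symCoordMatrix, LinearMap.toMatrix'_mulVec]

lemma symCoordMatrix_transpose_mulVec_eq_zero_iff (h2 : (2 : F) ≠ 0) (x v : ι → F) :
    (symCoordMatrix S x)ᵀ *ᵥ v = 0 ↔ SymOrth S x v := by
  rw [← forall_dotProduct_mulVec_eq_zero_iff h2, mulVec_transpose, ← dotProduct_eq_zero_iff]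
  simp only [← dotProduct_mulVec, symCoordMatrix_mulVec]
  refine ⟨fun h a ha => ?_, fun h y => h _ (isSymmSupported_symOfCoords y)⟩
  rw [← symOfCoords_coords ha]
  exact h _

variable [Fintype F] [DecidableEq F]

lemma rank_symCoordMatrix (h2 : (2 : F) ≠ 0) (x : ι → F) :
    (symCoordMatrix S x).rank = Fintype.card ι - freeRank S {i | x i ≠ 0} := by
  have hdual : Fintype.card F ^ (Fintype.card ι - (symCoordMatrix S x).rank)
      = Fintype.card F ^ freeRank S {i | x i ≠ 0} := by
    rw [← rank_transpose, ← card_mulVec_eq_zero,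
      Nat.card_congr (Equiv.subtypeEquivRight (symCoordMatrix_transpose_mulVec_eq_zero_iff h2 x)),
      card_symOrth_eq_indicator, card_symOrth_indicator h2]
  have hexp := Nat.pow_right_injective Fintype.one_lt_card hdual
  have hle := (symCoordMatrix S x).rank_le_card_height
  omega

lemma card_symmSupported_mulVec_eq_zero (h2 : (2 : F) ≠ 0) (x : ι → F) :
    Nat.card {a : Matrix ι ι F // IsSymmSupported S a ∧ a *ᵥ x = 0}
      = Fintype.card F ^
          (Fintype.card (SymPos S) - (Fintype.card ι - freeRank S {i | x i ≠ 0})) := by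
  rw [← rank_symCoordMatrix h2, ← card_mulVec_eq_zero]
  refine Nat.card_congr <| (Equiv.subtypeSubtypeEquivSubtypeInter _ _).symm.trans <|
    (symCoordsEquiv S F).subtypeEquiv fun a => ?_
  rw [symCoordMatrix_mulVec, symCoordsEquiv, Equiv.coe_fn_mk, symOfCoords_coords a.2]

lemma sum_card_symmSupported_rank_mul_pow (h2 : (2 : F) ≠ 0) :
    ∑ r ∈ range (Fintype.card ι + 1),
        Nat.card {a : Matrix ι ι F // IsSymmSupported S a ∧ a.rank = r} *
          Fintype.card F ^ (Fintype.card ι - r)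
      = ∑ T : Finset ι, (Fintype.card F - 1) ^ #T *
          Fintype.card F ^ (Fintype.card (SymPos S) - (Fintype.card ι - freeRank S T)) := by
  rw [sum_card_rank_mul_pow]
  simp only [card_symmSupported_mulVec_eq_zero h2]
  exact sum_comp_support fun T =>
    Fintype.card F ^ (Fintype.card (SymPos S) - (Fintype.card ι - freeRank S T))

end Coordinates

theorem sym_rank_average_polynomial_general (n : ℕ) (S : Set (Fin n × Fin n)) :
    ∃ f : Polynomial ℚ,
      ∀ (F : Type) [Field F] [Fintype F], Odd (Fintype.card F) →
        ∑ r ∈ Finset.range (n + 1),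
            (Nat.card {a : Matrix (Fin n) (Fin n) F //
                a.IsSymm ∧ (∀ i j, (i, j) ∉ S → a i j = 0) ∧ a.rank = r} : ℚ) *
              (Fintype.card F : ℚ) ^ (n - r)
          = f.eval (Fintype.card F : ℚ) := by
  refine ⟨∑ T : Finset (Fin n), (Polynomial.X - 1) ^ #T *
    Polynomial.X ^ (Fintype.card (SymPos S) - (n - freeRank S T)), fun F _ _ hodd => ?_⟩
  classical
  have h2 : (2 : F) ≠ 0 := Ring.two_ne_zero fun hchar => by
    have := FiniteField.even_card_of_char_two hchar
    rw [Nat.odd_iff] at hodd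
    omega
  have hcount := congrArg (Nat.cast : ℕ → ℚ) (sum_card_symmSupported_rank_mul_pow (S := S) h2)
  push_cast [Nat.cast_sub (Fintype.card_pos : 1 ≤ Fintype.card F)] at hcount
  simp only [IsSymmSupported, and_assoc, Fintype.card_fin] at hcount
  simpa [Polynomial.eval_finsetSum] using hcount

/-- For `n ≥ 1` and a set `S` of positions, there is a polynomial `f ∈ ℚ[X]` such that
for every finite field `F` of odd cardinality `q`, the sum
`∑_{r=0}^n |Sym_{n,r}(F; S)| · q^(n-r)` equals `f(q)`, where `Sym_{n,r}(F; S)` is the set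
of symmetric `n × n` matrices over `F` of rank `r` supported on `S`. -/
theorem sym_rank_average_polynomial (n : ℕ) (hn : 1 ≤ n) (S : Set (Fin n × Fin n)) :
    ∃ f : Polynomial ℚ,
      ∀ (F : Type) [Field F] [Fintype F], Odd (Fintype.card F) →
        ∑ r ∈ Finset.range (n + 1),
            (Nat.card {a : Matrix (Fin n) (Fin n) F //
                a.IsSymm ∧ (∀ i j, (i, j) ∉ S → a i j = 0) ∧ a.rank = r} : ℚ) *
              (Fintype.card F : ℚ) ^ (n - r)
          = f.eval (Fintype.card F : ℚ) :=
  sym_rank_average_polynomial_general n S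
end

section
/- Let Γ be a finite simple graph and fix a total order ⊑ on its vertex set. Then there exists a polynomial f ∈ ℚ[X] such that for every finite field F, cc(G_Γ(F)) = f(|F|). -/
/-- The group attached to a biadditive map `β` (Baer-type construction): the underlying
set is `X × C` with multiplication `(x, c) * (y, d) = (x + y, c + d + β x y)`. -/
@[ext]
structure Baer {X C : Type*} [AddCommGroup X] [AddCommGroup C] (β : X →+ X →+ C) where
  fst : X
  snd : C

namespace Baer

variable {X C : Type*} [AddCommGroup X] [AddCommGroup C] {β : X →+ X →+ C}

instance : Mul (Baer β) := ⟨fun a b => ⟨a.fst + b.fst, a.snd + b.snd + β a.fst b.fst⟩⟩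
instance : One (Baer β) := ⟨⟨0, 0⟩⟩
instance : Inv (Baer β) := ⟨fun a => ⟨-a.fst, -a.snd + β a.fst a.fst⟩⟩

instance : Group (Baer β) :=
  Group.ofLeftAxioms
    (fun a b c => by
      ext
      · show a.fst + b.fst + c.fst = a.fst + (b.fst + c.fst)
        exact add_assoc _ _ _
      · show a.snd + b.snd + β a.fst b.fst + c.snd + β (a.fst + b.fst) c.fst
            = a.snd + (b.snd + c.snd + β b.fst c.fst) + β a.fst (b.fst + c.fst)
        rw [map_add, AddMonoidHom.add_apply, map_add]
        abel)
    (fun a => by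
      ext
      · show 0 + a.fst = a.fst
        exact zero_add _
      · show 0 + a.snd + β 0 a.fst = a.snd
        rw [map_zero, AddMonoidHom.zero_apply]
        abel)
    (fun a => by
      ext
      · show -a.fst + a.fst = 0
        exact neg_add_cancel _
      · show -a.snd + β a.fst a.fst + a.snd + β (-a.fst) a.fst = 0
        rw [map_neg, AddMonoidHom.neg_apply]
        abel)

end Baer

/-- The biadditive map `(x, y) ↦ (f ↦ ∑ (v,w), x w * y v * c (v, w) f)` packaged as an
additive group homomorphism in each argument. -/
noncomputable def pairBeta {V F A : Type*} [Fintype V] [CommRing A] (c : V × V → F → A) :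
    (V → A) →+ (V → A) →+ (F → A) :=
  AddMonoidHom.mk'
    (fun x => AddMonoidHom.mk'
      (fun y => fun f => ∑ p : V × V, x p.2 * y p.1 * c p f)
      (fun y y' => by
        funext f
        simp only [Pi.add_apply]
        rw [← Finset.sum_add_distrib]
        exact Finset.sum_congr rfl fun p _ => by ring))
    (fun x x' => by
      refine AddMonoidHom.ext fun y => ?_
      funext f
      simp only [AddMonoidHom.mk'_apply, AddMonoidHom.add_apply, Pi.add_apply]
      rw [← Finset.sum_add_distrib]
      exact Finset.sum_congr rfl fun p _ => by ring)

open Classical in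
/-- The commutator bimap of the graphical group of a simple graph `Γ` relative to a total
order `⊑` on the vertices: `β x y = -∑_{v ⊏ w adjacent} (x w * y v) • e_{vw}`, with
values indexed by the edges of `Γ`. -/
noncomputable def graphBeta {V : Type*} [Fintype V] [LinearOrder V] (Γ : SimpleGraph V)
    (A : Type*) [CommRing A] : (V → A) →+ (V → A) →+ (Γ.edgeSet → A) :=
  pairBeta fun p e =>
    if p.1 < p.2 ∧ Γ.Adj p.1 p.2 ∧ (e : Sym2 V) = s(p.1, p.2) then -1 else 0

namespace GraphCC

open Finset SimpleGraph

variable {V : Type} [Fintype V] [LinearOrder V] (Γ : SimpleGraph V)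

/-- The symmetric "parallel along edges" condition. -/
def Cond {F : Type} [CommRing F] (x y : V → F) : Prop :=
  ∀ v w, Γ.Adj v w → x v * y w = x w * y v

open Classical in
/-- Exterior boundary of a vertex set. -/
noncomputable def bdry (S : Finset V) : Finset V :=
  Finset.univ.filter fun v => v ∉ S ∧ ∃ w ∈ S, Γ.Adj w v

open Classical in
/-- Vertices neither in `S` nor adjacent to `S`. -/
noncomputable def freeS (S : Finset V) : Finset V :=
  Finset.univ.filter fun v => v ∉ S ∧ ∀ w ∈ S, ¬ Γ.Adj w v

/-- Number of connected components of the induced subgraph on `S`. -/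
noncomputable def ncomp (S : Finset V) : ℕ :=
  Nat.card (Γ.induce (S : Set V)).ConnectedComponent

noncomputable def aExp (S : Finset V) : ℕ := ncomp Γ S + (freeS Γ S).card

noncomputable def nE : ℕ := Nat.card Γ.edgeSet

lemma mem_bdry {S : Finset V} {v : V} :
    v ∈ bdry Γ S ↔ v ∉ S ∧ ∃ w ∈ S, Γ.Adj w v := by
  simp [bdry]

lemma mem_freeS {S : Finset V} {v : V} :
    v ∈ freeS Γ S ↔ v ∉ S ∧ ∀ w ∈ S, ¬ Γ.Adj w v := by
  simp [freeS]

lemma edge_rep (e : Γ.edgeSet) :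
    ∃ a b : V, Γ.Adj a b ∧ (e : Sym2 V) = s(a, b) := by
  have : ∀ s : Sym2 V, s ∈ Γ.edgeSet → ∃ a b : V, Γ.Adj a b ∧ s = s(a, b) := by
    intro s
    induction s using Sym2.ind with
    | _ a b => exact fun h => ⟨a, b, Γ.mem_edgeSet.mp h, rfl⟩
  exact this e e.2

lemma edge_rep_lt (e : Γ.edgeSet) :
    ∃ a b : V, a < b ∧ Γ.Adj a b ∧ (e : Sym2 V) = s(a, b) := by
  obtain ⟨a, b, hadj, he⟩ := edge_rep Γ e
  rcases lt_or_gt_of_ne hadj.ne with h | h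
  · exact ⟨a, b, h, hadj, he⟩
  · exact ⟨b, a, h, hadj.symm, he.trans (Sym2.eq_swap)⟩

lemma pairBeta_apply {F A : Type} [CommRing A] (c : V × V → F → A)
    (x y : V → A) (f : F) :
    pairBeta c x y f = ∑ p : V × V, x p.2 * y p.1 * c p f := rfl

lemma graphBeta_apply_edge {A : Type} [CommRing A] (x y : V → A) (e : Γ.edgeSet)
    {a b : V} (hab : a < b) (hadj : Γ.Adj a b) (he : (e : Sym2 V) = s(a, b)) :
    graphBeta Γ A x y e = -(x b * y a) := by
  classical
  rw [show graphBeta Γ A x y e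
      = ∑ p : V × V, x p.2 * y p.1 *
        (if p.1 < p.2 ∧ Γ.Adj p.1 p.2 ∧ (e : Sym2 V) = s(p.1, p.2) then (-1 : A) else 0)
      from rfl]
  rw [Finset.sum_eq_single (a, b)]
  · rw [if_pos ⟨hab, hadj, he⟩]; ring
  · rintro ⟨c, d⟩ - hne
    rw [if_neg, mul_zero]
    rintro ⟨hcd, -, hecd⟩
    rcases Sym2.eq_iff.mp (he.symm.trans hecd) with ⟨h1, h2⟩ | ⟨h1, h2⟩
    · exact hne (by rw [h1, h2])
    · subst h1; subst h2; exact absurd hab (lt_asymm hcd)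
  · intro h; exact absurd (Finset.mem_univ _) h

lemma graphBeta_eq_iff {F : Type} [CommRing F] (x y : V → F) :
    graphBeta Γ F x y = graphBeta Γ F y x ↔ Cond Γ x y := by
  constructor
  · intro h v w hadj
    rcases lt_trichotomy v w with hvw | rfl | hvw
    · set e : Γ.edgeSet := ⟨s(v, w), Γ.mem_edgeSet.mpr hadj⟩ with hedef
      have h2 := congrFun h e
      rw [graphBeta_apply_edge Γ x y e hvw hadj rfl,
          graphBeta_apply_edge Γ y x e hvw hadj rfl] at h2
      linear_combination h2
    · exact absurd hadj (Γ.irrefl)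
    · set e : Γ.edgeSet := ⟨s(w, v), Γ.mem_edgeSet.mpr hadj.symm⟩ with hedef
      have h2 := congrFun h e
      rw [graphBeta_apply_edge Γ x y e hvw hadj.symm rfl,
          graphBeta_apply_edge Γ y x e hvw hadj.symm rfl] at h2
      linear_combination -h2
  · intro hc
    funext e
    obtain ⟨a, b, hab, hadj, he⟩ := edge_rep_lt Γ e
    rw [graphBeta_apply_edge Γ x y e hab hadj he,
        graphBeta_apply_edge Γ y x e hab hadj he]
    linear_combination hc a b hadj

section CondEquiv

variable {F : Type} [Field F]

/-- The central structural bijection: solutions `y` of the parallel condition for a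
vector `x` with support `S` correspond to a scalar per connected component of the
induced subgraph on `S`, together with a free value at each vertex neither in `S` nor
adjacent to `S`. -/
noncomputable def condEquiv (S : Finset V) (x : V → F)
    (hx : ∀ v, x v ≠ 0 ↔ v ∈ S) :
    {y : V → F // Cond Γ x y} ≃
      ((Γ.induce (S : Set V)).ConnectedComponent → F) × (↥(freeS Γ S) → F) where
  toFun y :=
    (SimpleGraph.ConnectedComponent.lift (fun v => y.1 v.1 * (x v.1)⁻¹) (by
        intro u w p hp
        clear hp
        induction p with
        | nil => rfl
        | @cons u u' w h p ih =>
          refine Eq.trans ?_ ih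
          have hadj : Γ.Adj u.1 u'.1 := h
          have h1 : x u.1 ≠ 0 := (hx _).mpr u.2
          have h2 : x u'.1 ≠ 0 := (hx _).mpr u'.2
          field_simp
          linear_combination -(y.2 u.1 u'.1 hadj)),
      fun v => y.1 v.1)
  invFun lu := ⟨fun v =>
      if h : v ∈ S then lu.1 ((Γ.induce (S : Set V)).connectedComponentMk ⟨v, h⟩) * x v
      else if h' : v ∈ bdry Γ S then 0
      else lu.2 ⟨v, (mem_freeS Γ).mpr
        ⟨h, fun w hw hadj => h' ((mem_bdry Γ).mpr ⟨h, w, hw, hadj⟩)⟩⟩, by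
    intro v w hadj
    dsimp only
    by_cases hv : v ∈ S <;> by_cases hw : w ∈ S
    · rw [dif_pos hv, dif_pos hw]
      have hcc : (Γ.induce (S : Set V)).connectedComponentMk ⟨v, hv⟩
          = (Γ.induce (S : Set V)).connectedComponentMk ⟨w, hw⟩ :=
        SimpleGraph.ConnectedComponent.connectedComponentMk_eq_of_adj
          (show (Γ.induce (S : Set V)).Adj ⟨v, hv⟩ ⟨w, hw⟩ from hadj)
      rw [hcc]; ring
    · rw [dif_pos hv, dif_neg hw, dif_pos ((mem_bdry Γ).mpr ⟨hw, v, hv, hadj⟩)]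
      have hxw : x w = 0 := by
        by_contra h0; exact hw ((hx w).mp h0)
      rw [hxw]; ring
    · rw [dif_neg hv, dif_pos hw, dif_pos ((mem_bdry Γ).mpr ⟨hv, w, hw, hadj.symm⟩)]
      have hxv : x v = 0 := by
        by_contra h0; exact hv ((hx v).mp h0)
      rw [hxv]; ring
    · have hxv : x v = 0 := by by_contra h0; exact hv ((hx v).mp h0)
      have hxw : x w = 0 := by by_contra h0; exact hw ((hx w).mp h0)
      rw [hxv, hxw]; ring⟩
  left_inv y := by
    apply Subtype.ext
    funext v
    dsimp only
    by_cases hv : v ∈ S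
    · rw [dif_pos hv]
      exact inv_mul_cancel_right₀ ((hx v).mpr hv) _
    · rw [dif_neg hv]
      by_cases hb : v ∈ bdry Γ S
      · rw [dif_pos hb]
        obtain ⟨-, w, hwS, hadj⟩ := (mem_bdry Γ).mp hb
        have h2 := y.2 w v hadj
        have hxv : x v = 0 := by by_contra h0; exact hv ((hx v).mp h0)
        have hxw : x w ≠ 0 := (hx w).mpr hwS
        rw [hxv, zero_mul] at h2
        rcases mul_eq_zero.mp h2 with h | h
        · exact absurd h hxw
        · exact h.symm
      · rw [dif_neg hb]
  right_inv lu := by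
    refine Prod.ext ?_ ?_
    · funext c
      refine SimpleGraph.ConnectedComponent.ind (fun u => ?_) c
      dsimp only
      show (if h : u.1 ∈ S then _ else _) * (x u.1)⁻¹ = _
      rw [dif_pos (Finset.mem_coe.mp u.2)]
      have h1 : x u.1 ≠ 0 := (hx _).mpr u.2
      rw [mul_inv_cancel_right₀ h1]
    · funext v
      have hvf := v.2
      rw [mem_freeS Γ] at hvf
      show (if h : v.1 ∈ S then _ else _) = _
      rw [dif_neg hvf.1, dif_neg (by
        rw [mem_bdry Γ]
        rintro ⟨-, w, hwS, hadj⟩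
        exact hvf.2 w hwS hadj : ¬ v.1 ∈ bdry Γ S)]

end CondEquiv

section Counting

variable {F : Type} [Field F] [Fintype F]

lemma card_cond_fiber (S : Finset V) (x : V → F) (hx : ∀ v, x v ≠ 0 ↔ v ∈ S) :
    Nat.card {y : V → F // Cond Γ x y} = Fintype.card F ^ aExp Γ S := by
  rw [Nat.card_congr (condEquiv Γ S x hx), Nat.card_prod, Nat.card_fun, Nat.card_fun,
    Nat.card_eq_fintype_card (α := F), Nat.card_eq_finsetCard, aExp, pow_add]
  rfl

/-- Vectors with prescribed support. -/
noncomputable def suppEquiv (S : Finset V) :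
    {x : V → F // ∀ v, x v ≠ 0 ↔ v ∈ S} ≃ (↥S → {a : F // a ≠ 0}) where
  toFun x v := ⟨x.1 v.1, (x.2 v.1).mpr v.2⟩
  invFun g := ⟨fun v => if h : v ∈ S then (g ⟨v, h⟩).1 else 0, by
    intro v
    by_cases h : v ∈ S
    · simpa [dif_pos h, h] using (g ⟨v, h⟩).2
    · simp [dif_neg h, h]⟩
  left_inv x := by
    apply Subtype.ext
    funext v
    dsimp only
    by_cases h : v ∈ S
    · rw [dif_pos h]
    · rw [dif_neg h]
      exact (not_not.mp fun hne => h ((x.2 v).mp hne)).symm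
  right_inv g := by
    funext v
    apply Subtype.ext
    dsimp only
    rw [dif_pos v.2]

lemma card_supp (S : Finset V) :
    Nat.card {x : V → F // ∀ v, x v ≠ 0 ↔ v ∈ S}
      = (Fintype.card F - 1) ^ S.card := by
  rw [Nat.card_congr (suppEquiv S), Nat.card_fun, Nat.card_congr unitsEquivNeZero.symm,
    Nat.card_units, Nat.card_eq_fintype_card (α := F), Nat.card_eq_finsetCard]

open Classical in
lemma card_cond_pairs :
    Nat.card {p : (V → F) × (V → F) // Cond Γ p.1 p.2}
      = ∑ S : Finset V, (Fintype.card F - 1) ^ S.card * Fintype.card F ^ aExp Γ S := by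
  classical
  rw [Nat.card_congr (Equiv.subtypeProdEquivSigmaSubtype fun x y => Cond Γ x y),
    Nat.card_eq_fintype_card, Fintype.card_sigma]
  have hline : ∀ x : V → F, Fintype.card {y : V → F // Cond Γ x y}
      = Fintype.card F ^ aExp Γ (Finset.univ.filter fun v => x v ≠ 0) := by
    intro x
    rw [← Nat.card_eq_fintype_card]
    exact card_cond_fiber Γ _ x fun v => by simp
  rw [Finset.sum_congr rfl fun x _ => hline x]
  rw [← Finset.sum_fiberwise_of_maps_to
    (g := fun x : V → F => Finset.univ.filter fun v => x v ≠ 0) (t := Finset.univ)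
    (fun x _ => Finset.mem_univ _)]
  refine Finset.sum_congr rfl fun S _ => ?_
  rw [Finset.sum_congr rfl (fun x hx => by rw [(Finset.mem_filter.mp hx).2]),
    Finset.sum_const, smul_eq_mul]
  congr 1
  have hiff : ∀ x : V → F,
      ((Finset.univ.filter fun v => x v ≠ 0) = S) ↔ (∀ v, x v ≠ 0 ↔ v ∈ S) := by
    intro x
    constructor
    · intro h v; rw [← h]; simp
    · intro h; ext v; simpa using h v
  rw [← Fintype.card_subtype, ← Nat.card_eq_fintype_card,
    Nat.card_congr (Equiv.subtypeEquivRight hiff), card_supp S]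

end Counting

open Classical in
lemma key_ineq (S : Finset V) : Fintype.card V ≤ nE Γ + aExp Γ S := by
  classical
  set x : V → ZMod 2 := fun v => if v ∈ S then 1 else 0 with hxdef
  have hx : ∀ v, x v ≠ 0 ↔ v ∈ S := by
    intro v
    by_cases h : v ∈ S <;> simp [hxdef, h]
  choose pa pb hpe using edge_rep Γ
  have hpadj : ∀ e, Γ.Adj (pa e) (pb e) := fun e => (hpe e).1
  have hps : ∀ e : Γ.edgeSet, (e : Sym2 V) = s(pa e, pb e) := fun e => (hpe e).2
  set D : (V → ZMod 2) →ₗ[ZMod 2] (Γ.edgeSet → ZMod 2) :=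
    { toFun := fun y e => x (pa e) * y (pb e) - x (pb e) * y (pa e)
      map_add' := by intros y z; funext e; simp only [Pi.add_apply]; ring
      map_smul' := by intros c y; funext e; simp only [Pi.smul_apply, smul_eq_mul,
        RingHom.id_apply]; ring } with hDdef
  have hker : ∀ y, y ∈ LinearMap.ker D ↔ Cond Γ x y := by
    intro y
    rw [LinearMap.mem_ker]
    constructor
    · intro h v w hadj
      set e : Γ.edgeSet := ⟨s(v, w), Γ.mem_edgeSet.mpr hadj⟩ with hedef
      have he := congrFun h e
      simp only [hDdef, LinearMap.coe_mk, AddHom.coe_mk, Pi.zero_apply] at he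
      have hvw : s(v, w) = s(pa e, pb e) := hps e
      rcases Sym2.eq_iff.mp hvw with ⟨h1, h2⟩ | ⟨h1, h2⟩
      · rw [← h1, ← h2] at he
        exact sub_eq_zero.mp he
      · rw [← h1, ← h2] at he
        exact (sub_eq_zero.mp he).symm
    · intro hc
      funext e
      simp only [hDdef, LinearMap.coe_mk, AddHom.coe_mk, Pi.zero_apply]
      rw [hc _ _ (hpadj e), sub_self]
  have hcard : Nat.card (LinearMap.ker D) = 2 ^ aExp Γ S := by
    rw [Nat.card_congr (Equiv.subtypeEquivRight hker), card_cond_fiber Γ S x hx]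
    norm_num [ZMod.card]
  have hfin : Module.finrank (ZMod 2) (LinearMap.ker D) = aExp Γ S := by
    have h2 := Module.card_eq_pow_finrank (K := ZMod 2) (V := LinearMap.ker D)
    rw [← Nat.card_eq_fintype_card, hcard] at h2
    have h3 : Fintype.card (ZMod 2) = 2 := by simp [ZMod.card]
    rw [h3] at h2
    exact (Nat.pow_right_injective (le_refl 2) h2.symm)
  have h1 := LinearMap.finrank_range_add_finrank_ker D
  have h2 : Module.finrank (ZMod 2) (LinearMap.range D) ≤ nE Γ := by
    refine le_trans (Submodule.finrank_le _) ?_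
    rw [Module.finrank_pi, nE, Nat.card_eq_fintype_card]
  rw [Module.finrank_pi, hfin] at h1
  omega

section BaerPart

variable {X C : Type} [AddCommGroup X] [AddCommGroup C] {β : X →+ X →+ C}

/-- The underlying set of a Baer group is the product. -/
def baerEquiv : Baer β ≃ X × C where
  toFun a := (a.fst, a.snd)
  invFun p := ⟨p.1, p.2⟩
  left_inv a := rfl
  right_inv p := rfl

instance [Finite X] [Finite C] : Finite (Baer β) :=
  Finite.of_equiv _ (baerEquiv (β := β)).symm

lemma baer_commute_iff (a b : Baer β) :
    Commute a b ↔ β a.fst b.fst = β b.fst a.fst := by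
  constructor
  · intro h
    have h2 := congrArg Baer.snd h
    have e1 : (a * b).snd = a.snd + b.snd + β a.fst b.fst := rfl
    have e2 : (b * a).snd = b.snd + a.snd + β b.fst a.fst := rfl
    rw [e1, e2, add_comm a.snd b.snd] at h2
    exact add_left_cancel h2
  · intro h
    show a * b = b * a
    ext
    · show a.fst + b.fst = b.fst + a.fst
      exact add_comm _ _
    · show a.snd + b.snd + β a.fst b.fst = b.snd + a.snd + β b.fst a.fst
      rw [h]
      abel

/-- Commuting pairs in a Baer group. -/
def commPairsEquiv :
    {p : Baer β × Baer β // Commute p.1 p.2} ≃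
      ({p : X × X // β p.1 p.2 = β p.2 p.1} × (C × C)) where
  toFun p := (⟨(p.1.1.fst, p.1.2.fst), (baer_commute_iff _ _).mp p.2⟩,
    (p.1.1.snd, p.1.2.snd))
  invFun p := ⟨(⟨p.1.1.1, p.2.1⟩, ⟨p.1.1.2, p.2.2⟩), (baer_commute_iff _ _).mpr p.1.2⟩
  left_inv p := rfl
  right_inv p := rfl

end BaerPart

end GraphCC

open GraphCC in
/-- For a finite simple graph `Γ` with a fixed total order on its vertices, there is a
polynomial `f ∈ ℚ[X]` such that for every finite field `F`, the number of conjugacy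
classes of the graphical group `G_Γ(F)` equals `f(|F|)`. -/
theorem graphical_group_class_number_polynomial {V : Type} [Fintype V] [LinearOrder V]
    (Γ : SimpleGraph V) :
    ∃ f : Polynomial ℚ,
      ∀ (F : Type) [Field F] [Fintype F],
        (Nat.card (ConjClasses (Baer (graphBeta Γ F))) : ℚ)
          = f.eval (Fintype.card F : ℚ) := by
  classical
  refine ⟨∑ S : Finset V, (Polynomial.X - 1) ^ S.card
      * Polynomial.X ^ (nE Γ + aExp Γ S - Fintype.card V), ?_⟩
  intro F _ _
  have hq1 : 1 ≤ Fintype.card F := Fintype.card_pos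
  have hqQ : ((Fintype.card F : ℚ)) ≠ 0 :=
    Nat.cast_ne_zero.mpr Fintype.card_pos.ne'
  have hb := card_comm_eq_card_conjClasses_mul_card (Baer (graphBeta Γ F))
  have hG : Nat.card (Baer (graphBeta Γ F))
      = Fintype.card F ^ (Fintype.card V + nE Γ) := by
    rw [Nat.card_congr (baerEquiv (β := graphBeta Γ F)), Nat.card_prod, Nat.card_fun,
      Nat.card_fun, Nat.card_eq_fintype_card (α := F), Nat.card_eq_fintype_card (α := V),
      nE, pow_add]
  have hCP : Nat.card {p : Baer (graphBeta Γ F) × Baer (graphBeta Γ F) // Commute p.1 p.2}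
      = (∑ S : Finset V, (Fintype.card F - 1) ^ S.card * Fintype.card F ^ aExp Γ S)
        * (Fintype.card F ^ nE Γ * Fintype.card F ^ nE Γ) := by
    rw [Nat.card_congr (commPairsEquiv (β := graphBeta Γ F)), Nat.card_prod, Nat.card_prod,
      Nat.card_congr (Equiv.subtypeEquivRight
        (fun p : (V → F) × (V → F) => graphBeta_eq_iff Γ p.1 p.2)),
      card_cond_pairs Γ, Nat.card_fun, Nat.card_eq_fintype_card (α := F),
      Nat.card_eq_fintype_card (α := ↥Γ.edgeSet), ← Nat.card_eq_fintype_card (α := ↥Γ.edgeSet)]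
    rw [show Nat.card ↥Γ.edgeSet = nE Γ from rfl]
  have key : (Nat.card (ConjClasses (Baer (graphBeta Γ F))) : ℚ)
        * (Fintype.card F : ℚ) ^ (Fintype.card V + nE Γ)
      = (∑ S : Finset V, ((Fintype.card F : ℚ) - 1) ^ S.card
          * (Fintype.card F : ℚ) ^ aExp Γ S)
        * (Fintype.card F : ℚ) ^ (2 * nE Γ) := by
    rw [hCP, hG] at hb
    have hb2 := congrArg (Nat.cast : ℕ → ℚ) hb
    push_cast [Nat.cast_sub hq1] at hb2
    rw [pow_add] at hb2
    rw [two_mul, pow_add, pow_add]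
    exact hb2.symm
  have heval : (Polynomial.eval (Fintype.card F : ℚ)
        (∑ S : Finset V, (Polynomial.X - 1) ^ S.card
          * Polynomial.X ^ (nE Γ + aExp Γ S - Fintype.card V)))
        * (Fintype.card F : ℚ) ^ (Fintype.card V + nE Γ)
      = (∑ S : Finset V, ((Fintype.card F : ℚ) - 1) ^ S.card
          * (Fintype.card F : ℚ) ^ aExp Γ S)
        * (Fintype.card F : ℚ) ^ (2 * nE Γ) := by
    rw [Polynomial.eval_finset_sum]
    simp only [Polynomial.eval_mul, Polynomial.eval_pow, Polynomial.eval_sub,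
      Polynomial.eval_X, Polynomial.eval_one]
    rw [Finset.sum_mul, Finset.sum_mul]
    refine Finset.sum_congr rfl fun S _ => ?_
    rw [mul_assoc, mul_assoc, ← pow_add, ← pow_add]
    congr 2
    have := key_ineq Γ S
    omega
  exact mul_right_cancel₀ (pow_ne_zero _ hqQ) (key.trans heval.symm)
end

section
/- Let V and E be finite sets, ⊑ a total order on V, and ♦ : ℤ^V × ℤ^V → ℤ^E an alternating ℤ-bilinear map. Then for every finite commutative ring A, cc(G_♦(A)) = |A|^{|E| − |V|} · Σ_{x ∈ A^V} |{y ∈ A^V : x ♦ y = 0 in A^E}|. -/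
open Classical in
/-- The `A`-bilinear extension of a `ℤ`-bilinear map `♦ : ℤ^V × ℤ^V → ℤ^E`, namely
`x ♦ y = ∑ v w, x v * y w • (v ♦ w)`. -/
noncomputable def diamondExt {V E : Type*} [Fintype V]
    (d : (V → ℤ) →ₗ[ℤ] (V → ℤ) →ₗ[ℤ] (E → ℤ)) (A : Type*) [CommRing A]
    (x y : V → A) : E → A :=
  fun f => ∑ v : V, ∑ w : V, x v * y w * ((d (Pi.single v 1) (Pi.single w 1) f : ℤ) : A)

open Classical in
/-- The commutator bimap `β x y = ∑_{v ⊏ w} (x w * y v) • (w ♦ v)` of the Baer group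
attached to an alternating bilinear map `♦` and a total order on `V`. -/
noncomputable def baerBeta {V E : Type*} [Fintype V] [LinearOrder V]
    (d : (V → ℤ) →ₗ[ℤ] (V → ℤ) →ₗ[ℤ] (E → ℤ)) (A : Type*) [CommRing A] :
    (V → A) →+ (V → A) →+ (E → A) :=
  pairBeta fun p f =>
    if p.1 < p.2 then ((d (Pi.single p.2 1) (Pi.single p.1 1) f : ℤ) : A) else 0

/-!
Count commuting pairs in two ways: in any finite group `G` there are `cc(G) · |G|` of them.
In `G_♦(A)` the elements `(x, c)` and `(y, d)` commute iff `β(x, y) = β(y, x)`, and because `♦`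
is alternating, `β(x, y) - β(y, x) = x ♦ y`. So the commuting pairs are the pairs `(x, y)` with
`x ♦ y = 0` together with arbitrary `(c, d)`, whence
`cc(G) · |A|^(|V| + |E|) = |A|^(2|E|) · ∑ₓ |{y : x ♦ y = 0}|`.
-/

namespace Baer

variable {X C : Type*} [AddCommGroup X] [AddCommGroup C] {β : X →+ X →+ C}

def equivProd : Baer β ≃ X × C where
  toFun g := (g.fst, g.snd)
  invFun p := ⟨p.1, p.2⟩

theorem commute_iff {a b : Baer β} : Commute a b ↔ β a.fst b.fst = β b.fst a.fst := by
  have hab : a * b = ⟨a.fst + b.fst, a.snd + b.snd + β a.fst b.fst⟩ := rfl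
  have hba : b * a = ⟨b.fst + a.fst, b.snd + a.snd + β b.fst a.fst⟩ := rfl
  rw [Commute, SemiconjBy, hab, hba, Baer.ext_iff, add_comm b.fst, add_comm b.snd]
  simp

def commutingPairsEquiv :
    {p : Baer β × Baer β // Commute p.1 p.2} ≃
      {q : X × X // β q.1 q.2 = β q.2 q.1} × (C × C) where
  toFun p := (⟨(p.1.1.fst, p.1.2.fst), commute_iff.mp p.2⟩, (p.1.1.snd, p.1.2.snd))
  invFun q := ⟨(⟨q.1.1.1, q.2.1⟩, ⟨q.1.1.2, q.2.2⟩), commute_iff.mpr q.1.2⟩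

theorem card_conjClasses_mul_card [Finite X] [Finite C] :
    Nat.card (ConjClasses (Baer β)) * Nat.card X =
      Nat.card {q : X × X // β q.1 q.2 = β q.2 q.1} * Nat.card C := by
  have hC : Nat.card C ≠ 0 := Nat.card_ne_zero.mpr ⟨inferInstance, inferInstance⟩
  have h := card_comm_eq_card_conjClasses_mul_card (Baer β)
  rw [Nat.card_congr commutingPairsEquiv, Nat.card_congr equivProd, Nat.card_prod,
    Nat.card_prod, Nat.card_prod] at h
  apply Nat.eq_of_mul_eq_mul_right (Nat.pos_of_ne_zero hC)
  linarith

end Baer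

section Diamond

variable {V E : Type*} [Fintype V] (d : (V → ℤ) →ₗ[ℤ] (V → ℤ) →ₗ[ℤ] (E → ℤ))
  (A : Type*) [CommRing A]

-- `diamondExt` is stated with the classical `DecidableEq V`, not the one `LinearOrder V` gives.
theorem diamondExt_apply [DecidableEq V] (x y : V → A) (f : E) :
    diamondExt d A x y f =
      ∑ v, ∑ w, x v * y w * ((d (Pi.single v 1) (Pi.single w 1) f : ℤ) : A) := by
  unfold diamondExt
  congr!

theorem baerBeta_apply [LinearOrder V] (x y : V → A) (f : E) :
    baerBeta d A x y f =
      ∑ v, ∑ w,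
        x w * y v * if v < w then ((d (Pi.single w 1) (Pi.single v 1) f : ℤ) : A) else 0 :=
  Fintype.sum_prod_type _

theorem baerBeta_sub_swap [LinearOrder V] (hd : d.IsAlt) (x y : V → A) :
    baerBeta d A x y - baerBeta d A y x = diamondExt d A x y := by
  funext f
  have hswap : ∀ v w : V, ((d (Pi.single w 1) (Pi.single v 1) f : ℤ) : A) =
      -((d (Pi.single v 1) (Pi.single w 1) f : ℤ) : A) := fun v w => by
    rw [← hd.neg (Pi.single v 1)]
    simp
  have hdiag : ∀ v : V, ((d (Pi.single v 1) (Pi.single v 1) f : ℤ) : A) = 0 := fun v => by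
    rw [hd.self_eq_zero, Pi.zero_apply, Int.cast_zero]
  rw [Pi.sub_apply, baerBeta_apply, baerBeta_apply, diamondExt_apply]
  conv_lhs => enter [1]; rw [Finset.sum_comm]
  rw [← Finset.sum_sub_distrib]
  refine Fintype.sum_congr _ _ fun v => ?_
  rw [← Finset.sum_sub_distrib]
  refine Fintype.sum_congr _ _ fun w => ?_
  rcases lt_trichotomy v w with h | rfl | h
  · simp only [h, h.not_gt, hswap v w, ↓reduceIte, mul_zero, mul_neg, sub_neg_eq_add,
      zero_add]
    ring
  · simp [hdiag]
  · simp [h, h.not_gt]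

theorem baerBeta_eq_swap_iff [LinearOrder V] (hd : d.IsAlt) (x y : V → A) :
    baerBeta d A x y = baerBeta d A y x ↔ diamondExt d A x y = 0 := by
  rw [← baerBeta_sub_swap d A hd, sub_eq_zero]

theorem card_baerBeta_eq_swap [LinearOrder V] [Fintype A] (hd : d.IsAlt) :
    Nat.card {q : (V → A) × (V → A) // baerBeta d A q.1 q.2 = baerBeta d A q.2 q.1} =
      ∑ x : V → A, Nat.card {y : V → A // diamondExt d A x y = 0} := by
  have e : {q : (V → A) × (V → A) // baerBeta d A q.1 q.2 = baerBeta d A q.2 q.1} ≃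
      {q : (V → A) × (V → A) // diamondExt d A q.1 q.2 = 0} :=
    Equiv.subtypeEquivRight fun q => baerBeta_eq_swap_iff d A hd q.1 q.2
  rw [Nat.card_congr <| e.trans <|
    Equiv.subtypeProdEquivSigmaSubtype fun x y => diamondExt d A x y = 0, Nat.card_sigma]

end Diamond

/-- For finite sets `V`, `E`, a total order on `V` and an alternating `ℤ`-bilinear map
`♦ : ℤ^V × ℤ^V → ℤ^E`, the number of conjugacy classes of the Baer group `G_♦(A)` over a
finite commutative ring `A` equals
`|A|^(|E| - |V|) · ∑_{x ∈ A^V} |{y ∈ A^V : x ♦ y = 0}|`. -/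
theorem baer_group_class_number (V E : Type) [Fintype V] [LinearOrder V] [Fintype E]
    (d : (V → ℤ) →ₗ[ℤ] (V → ℤ) →ₗ[ℤ] (E → ℤ)) (hd : ∀ x, d x x = 0)
    (A : Type) [CommRing A] [Fintype A] :
    (Nat.card (ConjClasses (Baer (baerBeta d A))) : ℚ)
      = (Fintype.card A : ℚ) ^ ((Fintype.card E : ℤ) - (Fintype.card V : ℤ)) *
          ∑ x : V → A, (Nat.card {y : V → A // diamondExt d A x y = 0} : ℚ) := by
  have h := Baer.card_conjClasses_mul_card (β := baerBeta d A)
  rw [card_baerBeta_eq_swap d A hd, Nat.card_fun, Nat.card_fun, Nat.card_eq_fintype_card (α := A),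
    Nat.card_eq_fintype_card (α := V), Nat.card_eq_fintype_card (α := E)] at h
  have hA : (Fintype.card A : ℚ) ≠ 0 := Nat.cast_ne_zero.mpr Fintype.card_ne_zero
  rw [zpow_sub₀ hA, zpow_natCast, zpow_natCast, div_mul_eq_mul_div,
    eq_div_iff (pow_ne_zero _ hA), mul_comm _ (∑ x, _)]
  exact_mod_cast h
end
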